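/- Fix integers q ≥ 1, β > 0, J > 0 and a field h : Fin q → ℝ. For N ≥ 1 let Z_N := Σ_{σ : Fin N → Fin q} exp( (βJ/N)·Σ_{1≤i<j≤N} δ(σ_i, σ_j) + β·Σ_{s=0}^{q−1} h_s·N_s(σ) ), where δ is the Kronecker delta and N_s(σ) := #{i : σ_i = s}. Then lim_{N→∞} (1/N)·log Z_N = max { (βJ/2)·Σ_{s} m_s² + β·Σ_{s} h_s·m_s − Σ_{s} m_s·log m_s : m_s ≥ 0 for all s, Σ_{s} m_s = 1 }, with the convention 0·log 0 = 0. -/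

import Mathlib

/-!
Write `ν_σ = N_s(σ)/N` for the empirical distribution of a configuration and
`U(m) = (βJ/2)∑ m_s² + β∑ h_s m_s`, so that `F(m) = U(m) - ∑ m_s log m_s`. Counting pairs,
the Boltzmann exponent of `σ` is exactly `N·U(ν_σ) - βJ/2`.

Lower bound: by the Gibbs variational principle with the product measure `m^⊗N`,
`log Z_N ≥ 𝔼[N·U(ν_σ)] - βJ/2 - N∑ m_s log m_s`, and `𝔼[U(ν_σ)] ≥ U(𝔼 ν_σ) = U(m)` by Jensen,
since `U` is convex for `βJ ≥ 0`.

Upper bound: `exp(N·U(ν_σ)) = exp(N·F(ν_σ))·∏_i ν_σ(σ_i)`. Summed over the configurations of a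
fixed type `ν`, `∏_i ν(σ_i)` is at most `(∑_s ν_s)^N = 1`, and there are at most `(N+1)^q` types,
so `log Z_N ≤ N·sup F + q·log(N+1)`.
-/

open Real Filter Finset

noncomputable def pottsCount {N q : ℕ} (σ : Fin N → Fin q) (s : Fin q) : ℝ :=
  ((Finset.univ.filter fun i => σ i = s).card : ℝ)

lemma mul_sub_log_sub_log_le {w Z : ℝ} (E : ℝ) (hw : 0 ≤ w) (hZ : 0 < Z) :
    w * (E - log w - log Z) ≤ exp E / Z - w := by
  rcases hw.eq_or_lt with rfl | hw
  · simp only [zero_mul, sub_zero]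
    positivity
  · have hwZ : 0 < w * Z := mul_pos hw hZ
    have hlog := log_le_sub_one_of_pos (div_pos (exp_pos E) hwZ)
    rw [log_div (exp_ne_zero E) hwZ.ne', log_exp, log_mul hw.ne' hZ.ne'] at hlog
    calc w * (E - log w - log Z) = w * (E - (log w + log Z)) := by ring
      _ ≤ w * (exp E / (w * Z) - 1) := mul_le_mul_of_nonneg_left hlog hw.le
      _ = exp E / Z - w := by field_simp

theorem sum_mul_sub_log_le_log_sum_exp {ι : Type*} [Fintype ι] {w : ι → ℝ} (hw : ∀ i, 0 ≤ w i)
    (hw1 : ∑ i, w i = 1) (E : ι → ℝ) : ∑ i, w i * (E i - log (w i)) ≤ log (∑ i, exp (E i)) := by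
  have hι : (univ : Finset ι).Nonempty := by
    by_contra hempty
    simp [not_nonempty_iff_eq_empty.1 hempty] at hw1
  have hZ : 0 < ∑ i, exp (E i) := sum_pos (fun i _ => exp_pos (E i)) hι
  have hterm := sum_le_sum fun i (_ : i ∈ univ) => mul_sub_log_sub_log_le (E i) (hw i) hZ
  simp only [mul_sub, sum_sub_distrib, ← sum_mul, ← sum_div, hw1, div_self hZ.ne', one_mul] at hterm
  simp only [mul_sub, sum_sub_distrib]
  linarith

section ProductWeights

variable {ι α : Type*} [Fintype ι]

lemma sum_prod_apply_eq_one [DecidableEq ι] [Fintype α] {m : α → ℝ} (hm : ∑ s, m s = 1) :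
    ∑ σ : ι → α, ∏ j, m (σ j) = 1 := by
  rw [← Fintype.prod_sum fun (_ : ι) s => m s]
  simp [hm]

lemma sum_prod_mul_apply [DecidableEq ι] [Fintype α] {m : α → ℝ} (hm : ∑ s, m s = 1) (i : ι)
    (f : α → ℝ) :
    ∑ σ : ι → α, (∏ j, m (σ j)) * f (σ i) = ∑ s, m s * f s := by
  set g : ι → α → ℝ := fun j s => m s * if j = i then f s else 1
  have hg : ∀ σ : ι → α, ∏ j, g j (σ j) = (∏ j, m (σ j)) * f (σ i) := by
    intro σ
    simp only [g, prod_mul_distrib, prod_ite_eq', mem_univ, if_true]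
  have hcol : ∀ j, ∑ s, g j s = if j = i then ∑ s, m s * f s else 1 := by
    intro j
    split_ifs <;> simp [g, *]
  rw [← Fintype.sum_congr _ _ hg, ← Fintype.prod_sum g]
  simp [hcol]

lemma mul_log_prod (m : α → ℝ) (σ : ι → α) :
    (∏ j, m (σ j)) * log (∏ j, m (σ j)) = ∑ j, (∏ k, m (σ k)) * log (m (σ j)) := by
  rw [← mul_sum]
  by_cases h0 : ∏ j, m (σ j) = 0
  · rw [h0, zero_mul, zero_mul]
  · rw [log_prod fun j _ hj => h0 (prod_eq_zero (mem_univ j) hj)]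

lemma sum_prod_mul_log_prod [DecidableEq ι] [Fintype α] {m : α → ℝ} (hm : ∑ s, m s = 1) :
    ∑ σ : ι → α, (∏ j, m (σ j)) * log (∏ j, m (σ j))
      = Fintype.card ι * ∑ s, m s * log (m s) := by
  simp_rw [mul_log_prod]
  rw [sum_comm, sum_congr rfl fun j _ => sum_prod_mul_apply hm j fun s => log (m s)]
  simp

end ProductWeights

theorem sum_eq_two_nsmul_sum_lt_add_sum_diag {α M : Type*} [LinearOrder α] [Fintype α]
    [AddCommMonoid M] (f : α × α → M) (hf : ∀ a b, f (a, b) = f (b, a)) :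
    ∑ p, f p = 2 • ∑ p ∈ univ.filter (fun p : α × α => p.1 < p.2), f p + ∑ a, f (a, a) := by
  have hsplit : ∀ p : α × α, f p = ((if p.1 < p.2 then f p else 0) + if p.2 < p.1 then f p else 0)
      + if p.1 = p.2 then f p else 0 := by
    rintro ⟨a, b⟩
    rcases lt_trichotomy a b with hab | rfl | hab
    · simp [hab, hab.ne, hab.not_gt]
    · simp
    · simp [hab, hab.ne', hab.not_gt]
  have hswap : ∑ p : α × α, (if p.2 < p.1 then f p else 0)
      = ∑ p : α × α, if p.1 < p.2 then f p else 0 :=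
    Fintype.sum_equiv (Equiv.prodComm α α) _ _ fun p => by
      simp only [Equiv.prodComm_apply, Prod.fst_swap, Prod.snd_swap]
      congr 1
      exact hf p.1 p.2
  have hdiag : ∑ p : α × α, (if p.1 = p.2 then f p else 0) = ∑ a, f (a, a) := by
    simp [Fintype.sum_prod_type]
  rw [Fintype.sum_congr _ _ hsplit, sum_add_distrib, sum_add_distrib, hswap, hdiag, sum_filter,
    two_nsmul]

section Potts

variable {N q : ℕ}

noncomputable def pottsLogWeight (β J : ℝ) (h : Fin q → ℝ) (σ : Fin N → Fin q) : ℝ :=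
  (β * J / N) * ∑ p ∈ univ.filter (fun p : Fin N × Fin N => p.1 < p.2),
      (if σ p.1 = σ p.2 then (1 : ℝ) else 0)
    + β * ∑ s, h s * pottsCount σ s

noncomputable def empiricalDistribution (σ : Fin N → Fin q) : Fin q → ℝ :=
  fun s => pottsCount σ s / N

noncomputable def pottsEnergy (β J : ℝ) (h : Fin q → ℝ) (m : Fin q → ℝ) : ℝ :=
  (β * J / 2) * ∑ s, m s ^ 2 + β * ∑ s, h s * m s

noncomputable def pottsFreeEnergy (β J : ℝ) (h : Fin q → ℝ) (m : Fin q → ℝ) : ℝ :=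
  pottsEnergy β J h m - ∑ s, m s * log (m s)

lemma sum_comp_eq_sum_pottsCount_mul (σ : Fin N → Fin q) (g : Fin q → ℝ) :
    ∑ i, g (σ i) = ∑ s, pottsCount σ s * g s := by
  rw [← sum_fiberwise' univ σ g]
  simp [pottsCount]

lemma sum_pottsCount (σ : Fin N → Fin q) : ∑ s, pottsCount σ s = N := by
  simpa using (sum_comp_eq_sum_pottsCount_mul σ fun _ => 1).symm

lemma pottsCount_apply_pos (σ : Fin N → Fin q) (i : Fin N) : 0 < pottsCount σ (σ i) := by
  unfold pottsCount
  exact_mod_cast card_pos.2 ⟨i, by simp⟩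

lemma sum_ite_eq_sum_pottsCount_sq (σ : Fin N → Fin q) :
    ∑ p : Fin N × Fin N, (if σ p.1 = σ p.2 then (1 : ℝ) else 0) = ∑ s, pottsCount σ s ^ 2 := by
  have hrow : ∀ i, ∑ j, (if σ i = σ j then (1 : ℝ) else 0) = pottsCount σ (σ i) := by
    intro i
    simp [pottsCount, sum_boole, eq_comm]
  simp only [Fintype.sum_prod_type, hrow, sum_comp_eq_sum_pottsCount_mul σ (pottsCount σ), sq]

lemma two_mul_sum_equal_pairs_eq (σ : Fin N → Fin q) :
    2 * ∑ p ∈ univ.filter (fun p : Fin N × Fin N => p.1 < p.2),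
        (if σ p.1 = σ p.2 then (1 : ℝ) else 0) = ∑ s, pottsCount σ s ^ 2 - N := by
  have hpairs := sum_eq_two_nsmul_sum_lt_add_sum_diag
    (fun p : Fin N × Fin N => if σ p.1 = σ p.2 then (1 : ℝ) else 0)
    fun a b => by simp only [eq_comm]
  simp only [sum_ite_eq_sum_pottsCount_sq, if_true, sum_const, card_univ, Fintype.card_fin,
    nsmul_eq_mul, mul_one] at hpairs
  push_cast at hpairs
  linarith

lemma pottsLogWeight_eq (β J : ℝ) (h : Fin q → ℝ) (hN : N ≠ 0) (σ : Fin N → Fin q) :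
    pottsLogWeight β J h σ = N * pottsEnergy β J h (empiricalDistribution σ) - β * J / 2 := by
  have hpairs := two_mul_sum_equal_pairs_eq σ
  have hN' : (N : ℝ) ≠ 0 := Nat.cast_ne_zero.2 hN
  unfold pottsLogWeight pottsEnergy empiricalDistribution
  rw [show ∑ p ∈ univ.filter (fun p : Fin N × Fin N => p.1 < p.2),
      (if σ p.1 = σ p.2 then (1 : ℝ) else 0) = (∑ s, pottsCount σ s ^ 2 - N) / 2 by linarith]
  simp only [div_pow, ← sum_div, mul_div_assoc', ← sum_div]
  field_simp
  ring

lemma empiricalDistribution_mem_stdSimplex (hN : N ≠ 0) (σ : Fin N → Fin q) :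
    empiricalDistribution σ ∈ stdSimplex ℝ (Fin q) := by
  refine ⟨fun s => div_nonneg (Nat.cast_nonneg _) (Nat.cast_nonneg _), ?_⟩
  unfold empiricalDistribution
  rw [← sum_div, sum_pottsCount, div_self (Nat.cast_ne_zero.2 hN)]

lemma pottsEnergy_sum_smul_le {ι : Type*} [Fintype ι] {β J : ℝ} (hβJ : 0 ≤ β * J)
    (h : Fin q → ℝ) {w : ι → ℝ} (hw : ∀ i, 0 ≤ w i) (hw1 : ∑ i, w i = 1) (p : ι → Fin q → ℝ) :
    pottsEnergy β J h (∑ i, w i • p i) ≤ ∑ i, w i * pottsEnergy β J h (p i) := by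
  have hsq : ∀ s, (∑ i, w i * p i s) ^ 2 ≤ ∑ i, w i * p i s ^ 2 := fun s => by
    simpa using (even_two.convexOn_pow (𝕜 := ℝ)).map_sum_le (t := univ) (p := fun i => p i s)
      (fun i _ => hw i) hw1 (fun i _ => Set.mem_univ _)
  simp only [pottsEnergy, Finset.sum_apply, Pi.smul_apply, smul_eq_mul]
  calc (β * J / 2) * ∑ s, (∑ i, w i * p i s) ^ 2 + β * ∑ s, h s * ∑ i, w i * p i s
      ≤ (β * J / 2) * ∑ s, ∑ i, w i * p i s ^ 2 + β * ∑ s, h s * ∑ i, w i * p i s := by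
        gcongr with s
        exact hsq s
    _ = ∑ i, w i * ((β * J / 2) * ∑ s, p i s ^ 2 + β * ∑ s, h s * p i s) := by
        simp only [mul_add, sum_add_distrib, mul_sum]
        congr 1 <;> rw [sum_comm] <;>
          exact sum_congr rfl fun _ _ => sum_congr rfl fun _ _ => by ring

lemma sum_prod_smul_empiricalDistribution (hN : N ≠ 0) {m : Fin q → ℝ} (hm : ∑ s, m s = 1) :
    ∑ σ : Fin N → Fin q, (∏ i, m (σ i)) • empiricalDistribution σ = m := by
  funext t
  have hcount : ∀ σ : Fin N → Fin q, pottsCount σ t = ∑ i, if σ i = t then (1 : ℝ) else 0 :=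
    fun σ => by simp [pottsCount, sum_boole]
  simp only [Finset.sum_apply, Pi.smul_apply, smul_eq_mul, empiricalDistribution, hcount,
    mul_div_assoc', ← sum_div, mul_sum]
  rw [sum_comm, sum_congr rfl fun i _ =>
    sum_prod_mul_apply hm i fun s => if s = t then (1 : ℝ) else 0]
  simp only [mul_ite, mul_one, mul_zero, sum_ite_eq', mem_univ, if_true, sum_const, card_univ,
    Fintype.card_fin, nsmul_eq_mul]
  exact mul_div_cancel_left₀ _ (Nat.cast_ne_zero.2 hN)

lemma empiricalDistribution_apply_pos (σ : Fin N → Fin q) (i : Fin N) :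
    0 < empiricalDistribution σ (σ i) :=
  div_pos (pottsCount_apply_pos σ i) (Nat.cast_pos.2 (Fin.pos i))

lemma log_prod_empiricalDistribution (σ : Fin N → Fin q) :
    log (∏ i, empiricalDistribution σ (σ i))
      = N * ∑ s, empiricalDistribution σ s * log (empiricalDistribution σ s) := by
  rw [log_prod fun i _ => (empiricalDistribution_apply_pos σ i).ne',
    sum_comp_eq_sum_pottsCount_mul σ fun s => log (empiricalDistribution σ s), mul_sum]
  refine sum_congr rfl fun s _ => ?_
  rcases eq_or_ne N 0 with rfl | hN
  · simp [pottsCount]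
  · simp only [empiricalDistribution]
    field_simp

theorem sum_prod_empiricalDistribution_le (hN : N ≠ 0) :
    ∑ σ : Fin N → Fin q, ∏ i, empiricalDistribution σ (σ i) ≤ (N + 1) ^ q := by
  classical
  set types := (univ : Finset (Fin N → Fin q)).image empiricalDistribution
  have hfiber : ∀ ν ∈ types,
      ∑ σ ∈ univ.filter (fun σ : Fin N → Fin q => empiricalDistribution σ = ν),
        ∏ i, ν (σ i) ≤ 1 := by
    intro ν hν
    obtain ⟨σ₀, -, rfl⟩ := mem_image.1 hν
    calc _ ≤ ∑ σ : Fin N → Fin q, ∏ i, empiricalDistribution σ₀ (σ i) :=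
          sum_le_univ_sum_of_nonneg fun σ =>
            prod_nonneg fun i _ => (empiricalDistribution_mem_stdSimplex hN σ₀).1 _
      _ = 1 := sum_prod_apply_eq_one (empiricalDistribution_mem_stdSimplex hN σ₀).2
  have htypes : types ⊆ (univ : Finset (Fin q → Fin (N + 1))).image fun k s => (k s : ℝ) / N := by
    intro ν hν
    obtain ⟨σ, -, rfl⟩ := mem_image.1 hν
    refine mem_image.2 ⟨fun s => ⟨(univ.filter fun i => σ i = s).card, ?_⟩, mem_univ _, rfl⟩
    exact Nat.lt_succ_of_le ((card_le_univ _).trans (Fintype.card_fin N).le)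
  have hcard : (types.card : ℝ) ≤ (N + 1) ^ q := by
    have := (card_le_card htypes).trans card_image_le
    rw [card_univ, Fintype.card_fun, Fintype.card_fin, Fintype.card_fin] at this
    exact_mod_cast this
  calc ∑ σ : Fin N → Fin q, ∏ i, empiricalDistribution σ (σ i)
      = ∑ ν ∈ types, ∑ σ ∈ univ.filter (fun σ : Fin N → Fin q => empiricalDistribution σ = ν),
          ∏ i, ν (σ i) := by
        rw [← sum_fiberwise_of_maps_to (g := empiricalDistribution)
          fun σ _ => mem_image_of_mem _ (mem_univ σ)]
        exact sum_congr rfl fun ν _ => sum_congr rfl fun σ hσ => by rw [(mem_filter.1 hσ).2]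
    _ ≤ ∑ _ν ∈ types, 1 := sum_le_sum hfiber
    _ ≤ (N + 1) ^ q := by simpa using hcard

theorem pottsFreeEnergy_le_log_partition {β J : ℝ} (hβJ : 0 ≤ β * J) (h : Fin q → ℝ)
    (hN : N ≠ 0) {m : Fin q → ℝ} (hm : m ∈ stdSimplex ℝ (Fin q)) :
    N * pottsFreeEnergy β J h m - β * J / 2
      ≤ log (∑ σ : Fin N → Fin q, exp (pottsLogWeight β J h σ)) := by
  set w : (Fin N → Fin q) → ℝ := fun σ => ∏ i, m (σ i)
  have hw : ∀ σ, 0 ≤ w σ := fun σ => prod_nonneg fun i _ => hm.1 _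
  have hw1 : ∑ σ, w σ = 1 := sum_prod_apply_eq_one hm.2
  have henergy : N * pottsEnergy β J h m
      ≤ ∑ σ, w σ * (N * pottsEnergy β J h (empiricalDistribution σ)) := by
    calc N * pottsEnergy β J h m
        = N * pottsEnergy β J h (∑ σ, w σ • empiricalDistribution σ) := by
          rw [sum_prod_smul_empiricalDistribution hN hm.2]
      _ ≤ N * ∑ σ, w σ * pottsEnergy β J h (empiricalDistribution σ) :=
          mul_le_mul_of_nonneg_left (pottsEnergy_sum_smul_le hβJ h hw hw1 _) (Nat.cast_nonneg N)
      _ = _ := by rw [mul_sum]; exact sum_congr rfl fun _ _ => by ring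
  have hentropy : ∑ σ, w σ * log (w σ) = N * ∑ s, m s * log (m s) := by
    simpa using sum_prod_mul_log_prod (ι := Fin N) hm.2
  calc N * pottsFreeEnergy β J h m - β * J / 2
      ≤ ∑ σ, w σ * (pottsLogWeight β J h σ - log (w σ)) := by
        simp only [pottsLogWeight_eq β J h hN, mul_sub, sum_sub_distrib, ← sum_mul, hw1, one_mul,
          hentropy, pottsFreeEnergy]
        linarith
    _ ≤ log (∑ σ, exp (pottsLogWeight β J h σ)) := sum_mul_sub_log_le_log_sum_exp hw hw1 _

theorem log_partition_le [NeZero q] {β J : ℝ} (hβJ : 0 ≤ β * J) (h : Fin q → ℝ) (hN : N ≠ 0)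
    {L : ℝ} (hL : ∀ m ∈ stdSimplex ℝ (Fin q), pottsFreeEnergy β J h m ≤ L) :
    log (∑ σ : Fin N → Fin q, exp (pottsLogWeight β J h σ)) ≤ N * L + q * log (N + 1) := by
  have hweight : ∀ σ : Fin N → Fin q, exp (pottsLogWeight β J h σ)
      ≤ exp (N * L) * ∏ i, empiricalDistribution σ (σ i) := by
    intro σ
    rw [← exp_log (prod_pos fun i _ => empiricalDistribution_apply_pos σ i), ← exp_add,
      exp_le_exp, log_prod_empiricalDistribution, pottsLogWeight_eq β J h hN]
    have hFL := mul_le_mul_of_nonneg_left (hL _ (empiricalDistribution_mem_stdSimplex hN σ))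
      (Nat.cast_nonneg N)
    rw [pottsFreeEnergy] at hFL
    linarith
  have hZ : 0 < ∑ σ : Fin N → Fin q, exp (pottsLogWeight β J h σ) :=
    sum_pos (fun σ _ => exp_pos _) univ_nonempty
  calc log (∑ σ : Fin N → Fin q, exp (pottsLogWeight β J h σ))
      ≤ log (exp (N * L) * (N + 1) ^ q) := by
        refine log_le_log hZ ((sum_le_sum fun σ _ => hweight σ).trans ?_)
        rw [← mul_sum]
        exact mul_le_mul_of_nonneg_left (sum_prod_empiricalDistribution_le hN) (exp_pos _).le
    _ = N * L + q * log (N + 1) := by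
        rw [log_mul (exp_ne_zero _) (by positivity), log_exp, log_pow]

lemma continuous_pottsFreeEnergy (β J : ℝ) (h : Fin q → ℝ) :
    Continuous (pottsFreeEnergy β J h) := by
  unfold pottsFreeEnergy pottsEnergy
  fun_prop

lemma bddAbove_range_pottsFreeEnergy (β J : ℝ) (h : Fin q → ℝ) :
    BddAbove (Set.range fun m : stdSimplex ℝ (Fin q) => pottsFreeEnergy β J h m.1) := by
  rw [← Set.image_eq_range]
  exact (isCompact_stdSimplex ℝ (Fin q)).bddAbove_image
    (continuous_pottsFreeEnergy β J h).continuousOn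

end Potts

theorem tendsto_ciSup_of_eventually_bounds {X ι : Type*} [Nonempty ι] {l : Filter X} {φ : ι → ℝ}
    {f ε δ : X → ℝ} (hε : Tendsto ε l (nhds 0)) (hδ : Tendsto δ l (nhds 0))
    (hlow : ∀ i, ∀ᶠ x in l, φ i - ε x ≤ f x) (hup : ∀ᶠ x in l, f x ≤ (⨆ i, φ i) + δ x) :
    Tendsto f l (nhds (⨆ i, φ i)) := by
  refine tendsto_order.2 ⟨fun b hb => ?_, fun b hb => ?_⟩
  · obtain ⟨i, hi⟩ := exists_lt_of_lt_ciSup hb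
    filter_upwards [hε.eventually (gt_mem_nhds (sub_pos.2 hi)), hlow i] with x hεx hx
    linarith
  · filter_upwards [hδ.eventually (gt_mem_nhds (sub_pos.2 hb)), hup] with x hδx hx
    linarith

lemma tendsto_log_add_one_div_natCast :
    Tendsto (fun N : ℕ => log (N + 1) / N) atTop (nhds 0) := by
  have h := (tendsto_pow_log_div_mul_add_atTop 1 (-1) 1 one_ne_zero).comp
    (tendsto_atTop_add_const_right atTop 1 tendsto_natCast_atTop_atTop)
  simpa [Function.comp_def] using h

theorem potts_free_energy
    (q : ℕ) (hq : 1 ≤ q) (β J : ℝ) (hβ : 0 < β) (hJ : 0 < J) (h : Fin q → ℝ) :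
    Tendsto
      (fun N : ℕ => (1 / (N : ℝ)) * Real.log
        (∑ σ : Fin N → Fin q, Real.exp
          ((β * J / (N : ℝ)) *
              ∑ p ∈ Finset.univ.filter (fun p : Fin N × Fin N => p.1 < p.2),
                (if σ p.1 = σ p.2 then (1 : ℝ) else 0)
            + β * ∑ s : Fin q, h s * pottsCount σ s)))
      atTop
      (nhds (⨆ m : {m : Fin q → ℝ // (∀ s, 0 ≤ m s) ∧ ∑ s, m s = 1},
        ((β * J / 2) * ∑ s : Fin q, (m.1 s) ^ 2
          + β * ∑ s : Fin q, h s * m.1 s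
          - ∑ s : Fin q, m.1 s * Real.log (m.1 s)))) := by
  have : NeZero q := ⟨by omega⟩
  have hβJ : 0 ≤ β * J := by positivity
  change Tendsto (fun N : ℕ => 1 / (N : ℝ) * log (∑ σ : Fin N → Fin q,
    exp (pottsLogWeight β J h σ))) atTop
    (nhds (⨆ m : stdSimplex ℝ (Fin q), pottsFreeEnergy β J h m.1))
  have : Nonempty (stdSimplex ℝ (Fin q)) := ⟨⟨_, single_mem_stdSimplex ℝ 0⟩⟩
  refine tendsto_ciSup_of_eventually_bounds (tendsto_const_div_atTop_nhds_zero_nat (β * J / 2))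
    (by simpa using tendsto_log_add_one_div_natCast.const_mul (q : ℝ)) (fun m => ?_) ?_
  · filter_upwards [eventually_gt_atTop 0] with N hN
    have hN' : (0 : ℝ) < N := Nat.cast_pos.2 hN
    have := pottsFreeEnergy_le_log_partition hβJ h hN.ne' m.2
    rw [one_div_mul_eq_div, le_div_iff₀ hN', sub_mul, div_mul_cancel₀ _ hN'.ne']
    linarith
  · filter_upwards [eventually_gt_atTop 0] with N hN
    have hN' : (0 : ℝ) < N := Nat.cast_pos.2 hN
    have := log_partition_le hβJ h hN.ne' fun m hm =>
      le_ciSup (bddAbove_range_pottsFreeEnergy β J h) ⟨m, hm⟩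
    rw [one_div_mul_eq_div, div_le_iff₀ hN', add_mul, mul_assoc, div_mul_cancel₀ _ hN'.ne']
    linarith
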